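/- The strata Π_n and Σ_n are disjoint for n ≥ 1, and the Π-strata (respectively Σ-strata) separate conversion classes: if M ∈ Π_i, N ∈ Π_j, and M ≃ N, then i = j; similarly for Σ_i and Σ_j. -/

import Mathlib

namespace ECC

/-- Terms of Luo's Extended Calculus of Constructions, in de Bruijn representation. -/
inductive Term : Type
  | var   : ℕ → Term
  | prop  : Term
  | type  : ℕ → Term
  | pi    : Term → Term → Term
  | sigma : Term → Term → Term
  | lam   : Term → Term → Term
  | app   : Term → Term → Term
  | pair  : Term → Term → Term → Term   -- ⟨M, N⟩_B with type annotation B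
  | proj1 : Term → Term
  | proj2 : Term → Term
deriving DecidableEq

/-- Lift (shift by `d`) all de Bruijn indices ≥ `k`. -/
def lift (d : ℕ) : ℕ → Term → Term
  | k, .var n       => if n < k then .var n else .var (n + d)
  | _, .prop        => .prop
  | _, .type j      => .type j
  | k, .pi A B      => .pi (lift d k A) (lift d (k+1) B)
  | k, .sigma A B   => .sigma (lift d k A) (lift d (k+1) B)
  | k, .lam A M     => .lam (lift d k A) (lift d (k+1) M)
  | k, .app M N     => .app (lift d k M) (lift d k N)
  | k, .pair M N B  => .pair (lift d k M) (lift d k N) (lift d k B)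
  | k, .proj1 M     => .proj1 (lift d k M)
  | k, .proj2 M     => .proj2 (lift d k M)

/-- Capture-avoiding substitution `[N/x]A` of the term `N` for the variable `x` in `A`. -/
def subst (N : Term) : ℕ → Term → Term
  | k, .var n       => if n < k then .var n else if n = k then lift k 0 N else .var (n - 1)
  | _, .prop        => .prop
  | _, .type j      => .type j
  | k, .pi A B      => .pi (subst N k A) (subst N (k+1) B)
  | k, .sigma A B   => .sigma (subst N k A) (subst N (k+1) B)
  | k, .lam A M     => .lam (subst N k A) (subst N (k+1) M)
  | k, .app M M'    => .app (subst N k M) (subst N k M')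
  | k, .pair M M' B => .pair (subst N k M) (subst N k M') (subst N k B)
  | k, .proj1 M     => .proj1 (subst N k M)
  | k, .proj2 M     => .proj2 (subst N k M)

/-- `[N/x₀]B` : substitution for the outermost bound variable. -/
def subst0 (B N : Term) : Term := subst N 0 B

/-- One-step reduction (β together with the projection reductions, closed under all
term-formation congruences). -/
inductive Red : Term → Term → Prop
  | beta    : Red (.app (.lam A M) N) (subst0 M N)
  | pr1     : Red (.proj1 (.pair M N B)) M
  | pr2     : Red (.proj2 (.pair M N B)) N
  | piL     : Red A A' → Red (.pi A B) (.pi A' B)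
  | piR     : Red B B' → Red (.pi A B) (.pi A B')
  | sigmaL  : Red A A' → Red (.sigma A B) (.sigma A' B)
  | sigmaR  : Red B B' → Red (.sigma A B) (.sigma A B')
  | lamL    : Red A A' → Red (.lam A M) (.lam A' M)
  | lamR    : Red M M' → Red (.lam A M) (.lam A M')
  | appL    : Red M M' → Red (.app M N) (.app M' N)
  | appR    : Red N N' → Red (.app M N) (.app M N')
  | pairL   : Red M M' → Red (.pair M N B) (.pair M' N B)
  | pairR   : Red N N' → Red (.pair M N B) (.pair M N' B)
  | pairB   : Red B B' → Red (.pair M N B) (.pair M N B')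
  | proj1C  : Red M M' → Red (.proj1 M) (.proj1 M')
  | proj2C  : Red M M' → Red (.proj2 M) (.proj2 M')

/-- Conversion `≃` : the equivalence relation generated by reduction. -/
def Conv : Term → Term → Prop := Relation.EqvGen Red

/-- `A` has a normal form. -/
def HasNF (A : Term) : Prop :=
  ∃ B, Relation.ReflTransGen Red A B ∧ ∀ C, ¬ Red B C

/-- `𝒯` : the set of normalisable terms. -/
def Tset : Set Term := {A | HasNF A}

/-- Universes are `Prop` and the `Type_j`. -/
def IsUniv (T : Term) : Prop := T = .prop ∨ ∃ j, T = .type j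

/-- The cumulativity relation `⪯` : the smallest preorder containing conversion,
the universe order, congruence for Π in the codomain, and congruence for Σ in both
components. -/
inductive Cum : Term → Term → Prop
  | conv     : Conv A B → Cum A B
  | propType : Cum .prop (.type 0)
  | typeType : j ≤ k → Cum (.type j) (.type k)
  | pi       : Conv A A' → Cum B B' → Cum (.pi A B) (.pi A' B')
  | sigma    : Cum A A' → Cum B B' → Cum (.sigma A B) (.sigma A' B')
  | trans    : Cum A B → Cum B C → Cum A C

/-- The strict cumulativity relation `≺` : `A ⪯ B` and `A ≄ B`. -/
def SCum (A B : Term) : Prop := Cum A B ∧ ¬ Conv A B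

/-- The stratified cumulativity relations `⪯ᵢ`. -/
inductive CumL : ℕ → Term → Term → Prop
  | conv     : Conv A B → CumL i A B
  | propType : CumL i .prop (.type j)
  | typeType : j < k → CumL i (.type j) (.type k)
  | succ     : CumL i A B → CumL (i+1) A B
  | pi       : Conv M (.pi A B) → Conv N (.pi A' B') → Conv A A' → CumL i B B' →
               CumL (i+1) M N
  | sigma    : Conv M (.sigma A B) → Conv N (.sigma A' B') → CumL i A A' → CumL i B B' →
               CumL (i+1) M N

/-- Strict stratified cumulativity `≺ᵢ`. -/
def SCumL (i : ℕ) (A B : Term) : Prop := CumL i A B ∧ ¬ Conv A B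

/-- Is the outermost symbol of a term Π or Σ? -/
def BinderHeaded : Term → Prop
  | .pi _ _    => True
  | .sigma _ _ => True
  | _          => False

/-- The base stratum: normalisable terms not convertible to a binder-headed
normalisable term. -/
def Base : Set Term :=
  {T | HasNF T ∧ ¬ ∃ B, HasNF B ∧ BinderHeaded B ∧ Conv T B}

/-- The stratification `(Π_n, Σ_n)` of `𝒯`. -/
def Strata : ℕ → Set Term × Set Term
  | 0 => (Base, Base)
  | n+1 =>
    ({T | ∃ k l, ∃ _ : k + l = n, ∃ A B, HasNF (Term.pi A B) ∧ Conv T (Term.pi A B) ∧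
        A ∈ (Strata k).1 ∪ (Strata k).2 ∧ B ∈ (Strata l).1 ∪ (Strata l).2},
     {T | ∃ k l, ∃ _ : k + l = n, ∃ A B, HasNF (Term.sigma A B) ∧ Conv T (Term.sigma A B) ∧
        A ∈ (Strata k).1 ∪ (Strata k).2 ∧ B ∈ (Strata l).1 ∪ (Strata l).2})
termination_by n => n
decreasing_by all_goals omega

/-- The stratum `Π_n`. -/
def PiStr (n : ℕ) : Set Term := (Strata n).1

/-- The stratum `Σ_n`. -/
def SigStr (n : ℕ) : Set Term := (Strata n).2

/-- The specification of the rank function `φ : 𝒯 → ω`. -/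
def PhiSpec (φ : Term → ℕ) : Prop :=
  (∀ M N, HasNF M → HasNF N → Conv M N → φ M = φ N) ∧
  (∀ T, HasNF T → Conv T .prop → φ T = 2) ∧
  (∀ T j, HasNF T → Conv T (.type j) → φ T = 3 + j) ∧
  (∀ T, T ∈ PiStr 0 → ¬ Conv T .prop → (∀ j, ¬ Conv T (.type j)) → φ T = 1) ∧
  (∀ T A B, HasNF T → (Conv T (.pi A B) ∨ Conv T (.sigma A B)) → φ T = φ A * φ B) ∧
  (∀ T, HasNF T → 0 < φ T)

mutual
/-- Valid contexts of ECC (de Bruijn: the head of the list is the most recent entry). -/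
inductive Valid : List Term → Prop
  | nil  : Valid []
  | cons : Typing Γ A (.type j) → Valid (A :: Γ)

/-- The typing judgement `Γ ⊢ M : A` of ECC. -/
inductive Typing : List Term → Term → Term → Prop
  | prop  : Valid Γ → Typing Γ .prop (.type 0)
  | type  : Valid Γ → Typing Γ (.type j) (.type (j+1))
  | var   : Valid Γ → Γ[n]? = some A → Typing Γ (.var n) (lift (n+1) 0 A)
  | pi1   : Typing Γ A (.type j) → Typing (A :: Γ) B .prop →
            Typing Γ (.pi A B) .prop
  | pi2   : Typing Γ A (.type j) → Typing (A :: Γ) B (.type j) →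
            Typing Γ (.pi A B) (.type j)
  | sig   : Typing Γ A (.type j) → Typing (A :: Γ) B (.type j) →
            Typing Γ (.sigma A B) (.type j)
  | lam   : Typing (A :: Γ) M B → Typing Γ (.lam A M) (.pi A B)
  | app   : Typing Γ M (.pi A B) → Typing Γ N A → Typing Γ (.app M N) (subst0 B N)
  | pair  : Typing Γ M A → Typing Γ N (subst0 B M) → Typing (A :: Γ) B (.type j) →
            Typing Γ (.pair M N (.sigma A B)) (.sigma A B)
  | proj1 : Typing Γ M (.sigma A B) → Typing Γ (.proj1 M) A
  | proj2 : Typing Γ M (.sigma A B) → Typing Γ (.proj2 M) (subst0 B (.proj1 M))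
  | cum   : Typing Γ M A → Typing Γ B (.type j) → Cum A B → Typing Γ M B
end

/-- `Type_j` for `j ∈ ℤ`, with the convention `Type_{-1} = Prop`. -/
def TType (j : ℤ) : Term := if j < 0 then .prop else .type j.toNat

/-- The typing judgement of the restricted system `ECC⁻`: the rules
`(Π2)(Σ)(app)(pair)(⪯)` of ECC are replaced by `(Π2')(Σ')(app')(pair')` and `(≃)_ρ`. -/
inductive TypingM : List Term → Term → Term → Prop
  | prop  : Valid Γ → TypingM Γ .prop (.type 0)
  | type  : Valid Γ → TypingM Γ (.type j) (.type (j+1))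
  | var   : Valid Γ → Γ[n]? = some A → TypingM Γ (.var n) (lift (n+1) 0 A)
  | pi1   : TypingM Γ A (.type j) → TypingM (A :: Γ) B .prop →
            TypingM Γ (.pi A B) .prop
  | pi2'  : TypingM Γ A (TType j) → TypingM (A :: Γ) B (TType k) → 0 ≤ k →
            TypingM Γ (.pi A B) (TType (max (max j k) 0))
  | sig'  : TypingM Γ A (TType j) → TypingM (A :: Γ) B (TType k) →
            TypingM Γ (.sigma A B) (TType (max (max j k) 0))
  | lam   : TypingM (A :: Γ) M B → TypingM Γ (.lam A M) (.pi A B)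
  | app'  : TypingM Γ M (.pi A B) → TypingM Γ N A' → Cum A' A →
            TypingM Γ (.app M N) (subst0 B N)
  | pair' : TypingM Γ M A → TypingM Γ N C → TypingM (A' :: Γ) B' (.type j) →
            Cum A A' → Cum C (subst0 B' M) →
            TypingM Γ (.pair M N (.sigma A' B')) (.sigma A' B')
  | proj1 : TypingM Γ M (.sigma A B) → TypingM Γ (.proj1 M) A
  | proj2 : TypingM Γ M (.sigma A B) → TypingM Γ (.proj2 M) (subst0 B (.proj1 M))
  | conv  : TypingM Γ M A → Conv A A' → Typing Γ A' (.type j) → TypingM Γ M A'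

end ECC

/-!
Everything rests on the Church–Rosser theorem, proved à la Tait–Martin-Löf: parallel
reduction has the triangle property with respect to the complete development, so
convertible terms have a common reduct. Since reduction preserves a Π or Σ head and acts
componentwise beneath it, a Π-type is never convertible to a Σ-type, and convertible
Π-types (Σ-types) have convertible components.

Every term of `Π_{n+1} ∪ Σ_{n+1}` is convertible to a normalisable binder-headed term, so it
is never convertible to a term of the base stratum. By strong induction, two convertible
terms of `Π_i ∪ Σ_i` and `Π_j ∪ Σ_j` then have `i = j`: for `i, j ≥ 1` their binder forms
are convertible, hence of the same kind with convertible components, whose indices agree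
by induction and add up to `i - 1` and `j - 1`.
-/

namespace ECC

theorem lift_lift_of_le {d d' k k' : ℕ} (h : k' ≤ k) (t : Term) :
    lift d' k' (lift d k t) = lift d (k + d') (lift d' k' t) := by
  induction t generalizing k k' with
  | var n =>
    by_cases n < k' <;> by_cases n < k <;>
      simp (disch := omega) only [lift, if_pos, if_neg, Term.var.injEq]
    omega
  | _ => simp (disch := omega) [lift, Nat.add_right_comm, *]

theorem lift_lift_of_le_of_le {d d' k k' : ℕ} (h₁ : k ≤ k') (h₂ : k' ≤ k + d) (t : Term) :
    lift d' k' (lift d k t) = lift (d + d') k t := by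
  induction t generalizing k k' with
  | var n =>
    by_cases n < k <;> simp (disch := omega) only [lift, if_pos, if_neg, Term.var.injEq]
    omega
  | _ => simp (disch := omega) [lift, *]

theorem lift_subst_of_le {d k k' : ℕ} (h : k' ≤ k) (N t : Term) :
    lift d k' (subst N k t) = subst N (k + d) (lift d k' t) := by
  induction t generalizing k k' with
  | var n =>
    obtain hn | rfl | hn := lt_trichotomy n k
    · by_cases n < k' <;> simp (disch := omega) only [lift, subst, if_pos, if_neg]
    · simp (disch := omega) only [lift, subst, if_neg, ↓reduceIte, lift_lift_of_le_of_le]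
    · simp (disch := omega) only [lift, subst, if_neg, Term.var.injEq]; omega
  | _ => simp (disch := omega) [lift, subst, Nat.add_right_comm, *]

theorem subst_lift_of_le_of_lt {d k j : ℕ} (h₁ : k ≤ j) (h₂ : j < k + d) (N t : Term) :
    subst N j (lift d k t) = lift (d - 1) k t := by
  induction t generalizing k j with
  | var n =>
    by_cases n < k <;> simp (disch := omega) only [lift, subst, if_pos, if_neg, Term.var.injEq]
    omega
  | _ => simp (disch := omega) [lift, subst, *]

theorem lift_subst_add (d k j : ℕ) (N t : Term) :
    lift d (k + j) (subst N j t) = subst (lift d k N) j (lift d (k + j + 1) t) := by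
  induction t generalizing j with
  | var n =>
    obtain hn | rfl | hn := lt_trichotomy n j
    · simp (disch := omega) only [lift, subst, if_pos]
    · simp (disch := omega) only [lift, subst, if_pos, if_neg, ↓reduceIte, lift_lift_of_le]
    · by_cases n < k + j + 1 <;>
        simp (disch := omega) only [lift, subst, if_pos, if_neg, Term.var.injEq]
      omega
  | _ => simp [lift, subst, Nat.add_assoc, *]

theorem subst_subst_add (k j : ℕ) (N P t : Term) :
    subst N (k + j) (subst P j t) = subst (subst N k P) j (subst N (k + j + 1) t) := by
  induction t generalizing j with
  | var n =>
    obtain hn | rfl | hn := lt_trichotomy n j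
    · simp (disch := omega) only [subst, if_pos]
    · simp (disch := omega) only [subst, if_pos, if_neg, ↓reduceIte, lift_subst_of_le]
    · obtain hn' | rfl | hn' := lt_trichotomy n (k + j + 1)
      · simp (disch := omega) only [subst, if_pos, if_neg]
      · simp (disch := omega) only [subst, if_neg, ↓reduceIte, subst_lift_of_le_of_lt,
          Nat.add_sub_cancel]
      · simp (disch := omega) only [subst, if_neg]
  | _ => simp [subst, Nat.add_assoc, *]

theorem lift_subst0 (d k : ℕ) (M N : Term) :
    lift d k (subst0 M N) = subst0 (lift d (k + 1) M) (lift d k N) := by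
  simpa [subst0] using lift_subst_add d k 0 N M

theorem subst_subst0 (k : ℕ) (P M N : Term) :
    subst P k (subst0 M N) = subst0 (subst P (k + 1) M) (subst P k N) := by
  simpa [subst0] using subst_subst_add k 0 P N M

inductive Par : Term → Term → Prop
  | var   : Par (.var n) (.var n)
  | prop  : Par .prop .prop
  | type  : Par (.type j) (.type j)
  | pi    : Par A A' → Par B B' → Par (.pi A B) (.pi A' B')
  | sigma : Par A A' → Par B B' → Par (.sigma A B) (.sigma A' B')
  | lam   : Par A A' → Par M M' → Par (.lam A M) (.lam A' M')
  | app   : Par M M' → Par N N' → Par (.app M N) (.app M' N')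
  | pair  : Par M M' → Par N N' → Par B B' → Par (.pair M N B) (.pair M' N' B')
  | proj1 : Par M M' → Par (.proj1 M) (.proj1 M')
  | proj2 : Par M M' → Par (.proj2 M) (.proj2 M')
  | beta  : Par M M' → Par N N' → Par (.app (.lam A M) N) (subst0 M' N')
  | pr1   : Par M M' → Par (.proj1 (.pair M N B)) M'
  | pr2   : Par N N' → Par (.proj2 (.pair M N B)) N'

theorem Par.refl (t : Term) : Par t t := by
  induction t <;> constructor <;> assumption

theorem Par.lift {t t' : Term} (h : Par t t') (d k : ℕ) : Par (lift d k t) (lift d k t') := by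
  induction h generalizing k with
  | var => simp only [ECC.lift]; split_ifs <;> exact .var
  | beta _ _ ihM ihN => rw [lift_subst0]; exact .beta (ihM _) (ihN _)
  | _ => constructor <;> apply_assumption

theorem Par.subst {t t' N N' : Term} (h : Par t t') (hN : Par N N') (k : ℕ) :
    Par (subst N k t) (subst N' k t') := by
  induction h generalizing k with
  | var => simp only [ECC.subst]; split_ifs <;> first | exact .var | exact hN.lift _ _
  | beta _ _ ihM ihN => rw [subst_subst0]; exact .beta (ihM _) (ihN _)
  | _ => constructor <;> apply_assumption

def develop : Term → Term
  | .app (.lam _ M) N => subst0 (develop M) (develop N)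
  | .proj1 (.pair M _ _) => develop M
  | .proj2 (.pair _ N _) => develop N
  | .var n => .var n
  | .prop => .prop
  | .type j => .type j
  | .pi A B => .pi (develop A) (develop B)
  | .sigma A B => .sigma (develop A) (develop B)
  | .lam A M => .lam (develop A) (develop M)
  | .app M N => .app (develop M) (develop N)
  | .pair M N B => .pair (develop M) (develop N) (develop B)
  | .proj1 M => .proj1 (develop M)
  | .proj2 M => .proj2 (develop M)

theorem Par.triangle {t u : Term} (h : Par t u) : Par u (develop t) := by
  induction h with
  | @app M _ _ _ hM _ ihM ihN =>
    cases M with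
    | lam => cases hM; cases ihM with | lam _ hP => exact .beta hP ihN
    | _ => exact .app ihM ihN
  | @proj1 M _ hM ihM =>
    cases M with
    | pair => cases hM; cases ihM with | pair hP _ _ => exact .pr1 hP
    | _ => exact .proj1 ihM
  | @proj2 M _ hM ihM =>
    cases M with
    | pair => cases hM; cases ihM with | pair _ hQ _ => exact .pr2 hQ
    | _ => exact .proj2 ihM
  | beta _ _ ihM ihN => exact ihM.subst ihN 0
  | pr1 _ ih => exact ih
  | pr2 _ ih => exact ih
  | _ => constructor <;> assumption

theorem Par.diamond {t u v : Term} (hu : Par t u) (hv : Par t v) :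
    ∃ w, Par u w ∧ Par v w :=
  ⟨develop t, hu.triangle, hv.triangle⟩

theorem Red.par {a b : Term} (h : Red a b) : Par a b := by
  induction h with
  | beta => exact .beta (.refl _) (.refl _)
  | pr1 => exact .pr1 (.refl _)
  | pr2 => exact .pr2 (.refl _)
  | _ => constructor <;> first | assumption | exact .refl _

abbrev Reds : Term → Term → Prop := Relation.ReflTransGen Red

theorem Reds.congr₂ {f : Term → Term → Term}
    (hl : ∀ {a a' b}, Red a a' → Red (f a b) (f a' b))
    (hr : ∀ {a b b'}, Red b b' → Red (f a b) (f a b'))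
    {a a' b b' : Term} (ha : Reds a a') (hb : Reds b b') : Reds (f a b) (f a' b') :=
  (Relation.ReflTransGen.lift (f · b) (fun _ _ => hl) _ _ ha).trans
    (Relation.ReflTransGen.lift (f a') (fun _ _ => hr) _ _ hb)

theorem Par.reds {a b : Term} (h : Par a b) : Reds a b := by
  induction h with
  | var | prop | type => exact .refl
  | pi _ _ ihA ihB => exact Reds.congr₂ (f := .pi) Red.piL Red.piR ihA ihB
  | sigma _ _ ihA ihB => exact Reds.congr₂ (f := .sigma) Red.sigmaL Red.sigmaR ihA ihB
  | lam _ _ ihA ihM => exact Reds.congr₂ (f := .lam) Red.lamL Red.lamR ihA ihM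
  | app _ _ ihM ihN => exact Reds.congr₂ (f := .app) Red.appL Red.appR ihM ihN
  | pair _ _ _ ihM ihN ihB =>
    exact (Reds.congr₂ (f := (.pair · · _)) Red.pairL Red.pairR ihM ihN).trans
      (Relation.ReflTransGen.lift (Term.pair _ _) (fun _ _ => Red.pairB) _ _ ihB)
  | proj1 _ ih => exact Relation.ReflTransGen.lift Term.proj1 (fun _ _ => Red.proj1C) _ _ ih
  | proj2 _ ih => exact Relation.ReflTransGen.lift Term.proj2 (fun _ _ => Red.proj2C) _ _ ih
  | beta _ _ ihM ihN =>
    exact .tail (Reds.congr₂ (f := .app) Red.appL Red.appR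
      (Reds.congr₂ (f := .lam) Red.lamL Red.lamR .refl ihM) ihN) Red.beta
  | pr1 _ ih => exact .head Red.pr1 ih
  | pr2 _ ih => exact .head Red.pr2 ih

theorem Conv.symm {a b : Term} (h : Conv a b) : Conv b a := Relation.EqvGen.symm _ _ h

theorem Conv.trans {a b c : Term} (hab : Conv a b) (hbc : Conv b c) : Conv a c :=
  Relation.EqvGen.trans _ _ _ hab hbc

theorem Reds.conv {a b : Term} (h : Reds a b) : Conv a b :=
  Relation.EqvGen.reflTransGen_le_eqvGen Red _ _ h

theorem Conv.exists_reds {M N : Term} (h : Conv M N) : ∃ Z, Reds M Z ∧ Reds N Z := by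
  have hequiv : Equivalence (Relation.Join (Relation.ReflTransGen Par)) :=
    Relation.equivalence_join_reflTransGen fun _ _ _ hu hv =>
      let ⟨w, huw, hvw⟩ := Par.diamond hu hv
      ⟨w, .single huw, .single hvw⟩
  have := hequiv.isEquiv
  obtain ⟨Z, hMZ, hNZ⟩ :=
    Relation.EqvGen.eqvGen_le (r' := Relation.Join (Relation.ReflTransGen Par))
      (fun _ b hab => ⟨b, .single hab.par, .refl⟩) _ _ h
  have hPar_reds := Relation.reflTransGen_closed fun _ _ (hab : Par _ _) => hab.reds
  exact ⟨Z, hPar_reds _ _ hMZ, hPar_reds _ _ hNZ⟩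

theorem Reds.pi_inv {A B T : Term} (h : Reds (.pi A B) T) :
    ∃ A' B', T = .pi A' B' ∧ Reds A A' ∧ Reds B B' := by
  induction h with
  | refl => exact ⟨A, B, rfl, .refl, .refl⟩
  | tail _ hstep ih =>
    obtain ⟨A', B', rfl, hA, hB⟩ := ih
    cases hstep with
    | piL h => exact ⟨_, _, rfl, hA.tail h, hB⟩
    | piR h => exact ⟨_, _, rfl, hA, hB.tail h⟩

theorem Reds.sigma_inv {A B T : Term} (h : Reds (.sigma A B) T) :
    ∃ A' B', T = .sigma A' B' ∧ Reds A A' ∧ Reds B B' := by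
  induction h with
  | refl => exact ⟨A, B, rfl, .refl, .refl⟩
  | tail _ hstep ih =>
    obtain ⟨A', B', rfl, hA, hB⟩ := ih
    cases hstep with
    | sigmaL h => exact ⟨_, _, rfl, hA.tail h, hB⟩
    | sigmaR h => exact ⟨_, _, rfl, hA, hB.tail h⟩

theorem not_conv_pi_sigma {A B C D : Term} : ¬ Conv (.pi A B) (.sigma C D) := fun h => by
  obtain ⟨Z, hpi, hsigma⟩ := h.exists_reds
  obtain ⟨_, _, rfl, -, -⟩ := hpi.pi_inv
  obtain ⟨_, _, h, -, -⟩ := hsigma.sigma_inv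
  cases h

theorem Conv.pi_inj {A B A' B' : Term} (h : Conv (.pi A B) (.pi A' B')) :
    Conv A A' ∧ Conv B B' := by
  obtain ⟨Z, h, h'⟩ := h.exists_reds
  obtain ⟨_, _, rfl, hA, hB⟩ := h.pi_inv
  obtain ⟨_, _, ⟨⟩, hA', hB'⟩ := h'.pi_inv
  exact ⟨hA.conv.trans hA'.conv.symm, hB.conv.trans hB'.conv.symm⟩

theorem Conv.sigma_inj {A B A' B' : Term} (h : Conv (.sigma A B) (.sigma A' B')) :
    Conv A A' ∧ Conv B B' := by
  obtain ⟨Z, h, h'⟩ := h.exists_reds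
  obtain ⟨_, _, rfl, hA, hB⟩ := h.sigma_inv
  obtain ⟨_, _, ⟨⟩, hA', hB'⟩ := h'.sigma_inv
  exact ⟨hA.conv.trans hA'.conv.symm, hB.conv.trans hB'.conv.symm⟩

theorem Conv.binder_inj {X Y A B A' B' : Term} (hX : X = .pi A B ∨ X = .sigma A B)
    (hY : Y = .pi A' B' ∨ Y = .sigma A' B') (h : Conv X Y) : Conv A A' ∧ Conv B B' := by
  rcases hX with rfl | rfl <;> rcases hY with rfl | rfl
  · exact h.pi_inj
  · exact (not_conv_pi_sigma h).elim
  · exact (not_conv_pi_sigma h.symm).elim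
  · exact h.sigma_inj

def Stratum (n : ℕ) : Set Term := PiStr n ∪ SigStr n

theorem stratum_zero : Stratum 0 = Base := by
  simp only [Stratum, PiStr, SigStr, Strata, Set.union_self]

theorem mem_piStr_succ {T : Term} {n : ℕ} :
    T ∈ PiStr (n + 1) ↔ ∃ k l, k + l = n ∧ ∃ A B, HasNF (.pi A B) ∧ Conv T (.pi A B) ∧
      A ∈ Stratum k ∧ B ∈ Stratum l := by
  simp only [PiStr, SigStr, Strata, Stratum, exists_prop, Set.mem_ofPred_eq]

theorem mem_sigStr_succ {T : Term} {n : ℕ} :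
    T ∈ SigStr (n + 1) ↔ ∃ k l, k + l = n ∧ ∃ A B, HasNF (.sigma A B) ∧
      Conv T (.sigma A B) ∧ A ∈ Stratum k ∧ B ∈ Stratum l := by
  simp only [PiStr, SigStr, Strata, Stratum, exists_prop, Set.mem_ofPred_eq]

theorem piStr_succ_inter_sigStr_succ (n : ℕ) : PiStr (n + 1) ∩ SigStr (n + 1) = ∅ := by
  refine Set.eq_empty_of_forall_notMem fun T ⟨hpi, hsigma⟩ => ?_
  obtain ⟨-, -, -, _, _, -, hT, -⟩ := mem_piStr_succ.1 hpi
  obtain ⟨-, -, -, _, _, -, hT', -⟩ := mem_sigStr_succ.1 hsigma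
  exact not_conv_pi_sigma (hT.symm.trans hT')

theorem exists_binder_of_mem_stratum_succ {T : Term} {n : ℕ} (h : T ∈ Stratum (n + 1)) :
    ∃ k l, k + l = n ∧ ∃ A B X, (X = .pi A B ∨ X = .sigma A B) ∧ HasNF X ∧ Conv T X ∧
      A ∈ Stratum k ∧ B ∈ Stratum l := by
  rcases h with h | h
  · obtain ⟨k, l, hkl, A, B, hX, hT, hA, hB⟩ := mem_piStr_succ.1 h
    exact ⟨k, l, hkl, A, B, _, .inl rfl, hX, hT, hA, hB⟩
  · obtain ⟨k, l, hkl, A, B, hX, hT, hA, hB⟩ := mem_sigStr_succ.1 h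
    exact ⟨k, l, hkl, A, B, _, .inr rfl, hX, hT, hA, hB⟩

theorem not_conv_of_mem_base_of_mem_stratum_succ {M N : Term} {n : ℕ} (hM : M ∈ Base)
    (hN : N ∈ Stratum (n + 1)) : ¬ Conv M N := fun hMN => by
  obtain ⟨-, -, -, _, _, X, hX, hXnf, hNX, -⟩ := exists_binder_of_mem_stratum_succ hN
  refine hM.2 ⟨X, hXnf, ?_, hMN.trans hNX⟩
  rcases hX with rfl | rfl <;> trivial

theorem eq_of_conv_of_mem_stratum {i j : ℕ} {M N : Term} (hM : M ∈ Stratum i)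
    (hN : N ∈ Stratum j) (hMN : Conv M N) : i = j := by
  induction i using Nat.strong_induction_on generalizing j M N with
  | _ i ih =>
    rcases i with _ | i <;> rcases j with _ | j
    · rfl
    · rw [stratum_zero] at hM
      exact (not_conv_of_mem_base_of_mem_stratum_succ hM hN hMN).elim
    · rw [stratum_zero] at hN
      exact (not_conv_of_mem_base_of_mem_stratum_succ hN hM hMN.symm).elim
    · obtain ⟨k, l, rfl, A, B, X, hX, -, hMX, hA, hB⟩ := exists_binder_of_mem_stratum_succ hM
      obtain ⟨k', l', rfl, A', B', Y, hY, -, hNY, hA', hB'⟩ :=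
        exists_binder_of_mem_stratum_succ hN
      obtain ⟨hAA', hBB'⟩ := Conv.binder_inj hX hY (hMX.symm.trans (hMN.trans hNY))
      rw [ih k (by omega) hA hA' hAA', ih l (by omega) hB hB' hBB']

end ECC

/-- the strata `Π_n` and `Σ_n` are disjoint for `n ≥ 1`, and the
Π-strata (resp. Σ-strata) separate conversion classes. -/
theorem strata_disjoint_and_separate_conversion :
    (∀ n : ℕ, 1 ≤ n → ECC.PiStr n ∩ ECC.SigStr n = ∅) ∧
    (∀ (i j : ℕ) (M N : ECC.Term),
      M ∈ ECC.PiStr i → N ∈ ECC.PiStr j → ECC.Conv M N → i = j) ∧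
    (∀ (i j : ℕ) (M N : ECC.Term),
      M ∈ ECC.SigStr i → N ∈ ECC.SigStr j → ECC.Conv M N → i = j) := by
  refine ⟨fun n hn => ?_,
    fun _ _ _ _ hM hN => ECC.eq_of_conv_of_mem_stratum (.inl hM) (.inl hN),
    fun _ _ _ _ hM hN => ECC.eq_of_conv_of_mem_stratum (.inr hM) (.inr hN)⟩
  obtain ⟨n, rfl⟩ := Nat.exists_eq_add_of_le' hn
  exact ECC.piStr_succ_inter_sigStr_succ n
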